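/- arXiv:0809.0688 — 3 statements merged into one kernel-verified Lean document; each statement's English description precedes it below -/
import Mathlib

section
/- For every integer n ≥ 1, every real c ≥ 0, and every real t ≥ n(log n + c), we have Σ_{j=1}^{n-1} (n!/(n-j)!)^2 · (1/j!) · exp(-2tj/n) ≤ 2·e^{-2c}. -/
/-!
Since `n! / (n - j)! ≤ n ^ j` and `t / n ≥ log n + c`, the `j`-th term is at most
`n ^ (2j) · e^{-2j log n - 2cj} / j! = e^{-2cj} / j! ≤ e^{-2c} / j!`,
and `∑_{j ≥ 1} 1 / j! = e - 1 ≤ 2`.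
-/

open Real Finset Nat

lemma Nat.cast_factorial_div_factorial_sub_le_pow {n j : ℕ} (hj : j ≤ n) :
    (n ! : ℝ) / (n - j)! ≤ (n : ℝ) ^ j := by
  rw [div_le_iff₀ (mod_cast (n - j).factorial_pos), ← Nat.factorial_mul_descFactorial hj]
  push_cast
  rw [mul_comm]
  gcongr
  exact_mod_cast n.descFactorial_le_pow j

lemma Real.pow_sq_mul_exp_le {x c t : ℝ} (hx : 0 < x) (ht : x * (log x + c) ≤ t) (j : ℕ) :
    (x ^ j) ^ 2 * exp (-2 * t * j / x) ≤ exp (-2 * c * j) := by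
  have ht' : log x + c ≤ t / x := by rwa [le_div_iff₀ hx, mul_comm]
  rw [← pow_mul, ← exp_log hx, ← exp_nat_mul, ← exp_add, exp_log hx]
  gcongr
  have hj : (0 : ℝ) ≤ j := j.cast_nonneg
  calc ((j * 2 : ℕ) : ℝ) * log x + -2 * t * j / x = -2 * j * (t / x - log x) := by
        push_cast; ring
    _ ≤ -2 * j * c := by nlinarith
    _ = -2 * c * j := by ring

lemma Real.sum_Icc_one_div_factorial_le_two (m : ℕ) :
    ∑ j ∈ Icc 1 m, (1 / j ! : ℝ) ≤ 2 := by
  have hIcc : Icc 1 m = {j ∈ range (m + 1) | 1 ≤ j} := by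
    ext j
    simp only [mem_Icc, mem_filter, mem_range]
    omega
  calc ∑ j ∈ Icc 1 m, (1 / j ! : ℝ)
      ≤ (1 : ℕ).succ / ((1 : ℕ)! * (1 : ℕ)) :=
        hIcc ▸ Complex.sum_div_factorial_le 1 (m + 1) one_pos
    _ = 2 := by norm_num

theorem continuous_l2_bound_general (n : ℕ) (c t : ℝ) (hc : 0 ≤ c)
    (ht : (n : ℝ) * (Real.log n + c) ≤ t) :
    ∑ j ∈ Finset.Icc 1 (n - 1),
      ((n.factorial : ℝ) / (n - j).factorial) ^ 2 * (1 / j.factorial)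
        * Real.exp (-2 * t * j / n) ≤ 2 * Real.exp (-2 * c) := by
  have term_le : ∀ j ∈ Icc 1 (n - 1),
      ((n ! : ℝ) / (n - j)!) ^ 2 * (1 / j !) * exp (-2 * t * j / n)
        ≤ exp (-2 * c) * (1 / j !) := by
    intro j hj
    obtain ⟨hj1, hjn⟩ := mem_Icc.mp hj
    have hn : (0 : ℝ) < n := by exact_mod_cast (by omega : 0 < n)
    have hcj : exp (-2 * c * j) ≤ exp (-2 * c) := by
      rw [exp_le_exp]
      nlinarith [(by exact_mod_cast hj1 : (1 : ℝ) ≤ j)]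
    calc ((n ! : ℝ) / (n - j)!) ^ 2 * (1 / j !) * exp (-2 * t * j / n)
        = (1 / j !) * (((n ! : ℝ) / (n - j)!) ^ 2 * exp (-2 * t * j / n)) := by ring
      _ ≤ (1 / j !) * (((n : ℝ) ^ j) ^ 2 * exp (-2 * t * j / n)) := by
        gcongr
        exact Nat.cast_factorial_div_factorial_sub_le_pow (by omega)
      _ ≤ (1 / j !) * exp (-2 * c) := by
        gcongr
        exact (Real.pow_sq_mul_exp_le hn ht j).trans hcj
      _ = exp (-2 * c) * (1 / j !) := mul_comm _ _
  calc _ ≤ ∑ j ∈ Icc 1 (n - 1), exp (-2 * c) * (1 / j ! : ℝ) := sum_le_sum term_le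
    _ = exp (-2 * c) * ∑ j ∈ Icc 1 (n - 1), (1 / j ! : ℝ) := (mul_sum ..).symm
    _ ≤ exp (-2 * c) * 2 := by gcongr; exact Real.sum_Icc_one_div_factorial_le_two _
    _ = 2 * exp (-2 * c) := mul_comm _ _

/-- For every integer `n ≥ 1`, every real `c ≥ 0`, and every real `t ≥ n(log n + c)`,
`Σ_{j=1}^{n-1} (n!/(n-j)!)² · (1/j!) · exp(-2tj/n) ≤ 2·e^{-2c}`. -/
theorem continuous_l2_bound (n : ℕ) (hn : 1 ≤ n) (c t : ℝ) (hc : 0 ≤ c)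
    (ht : (n : ℝ) * (Real.log n + c) ≤ t) :
    ∑ j ∈ Finset.Icc 1 (n - 1),
      ((n.factorial : ℝ) / (n - j).factorial) ^ 2 * (1 / j.factorial)
        * Real.exp (-2 * t * j / n) ≤ 2 * Real.exp (-2 * c) :=
  continuous_l2_bound_general n c t hc ht
end

section
/- Let A_j = (n!/(n-j)!)^2 · (1/j!) · (1 - (2j/n)(1 - (j-1)/n))^{n log n} for integers 1 ≤ j ≤ n/2. For n ≥ 14, Σ_{j=1}^{⌊n/4⌋} A_j ≤ 2. -/
/-!
Every term is at most `2 * (1 / 2) ^ j`, so the sum is dominated by a geometric series.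
For the term bound, `n! / (n - j)! ≤ n ^ j` and `1 - x ≤ exp (-x - x ^ 2 / 2)` for the base
`1 - x` of the real power; as `4 * j ≤ n` forces `x ≥ 3 * j / (2 * n)`, this gives
`A_j ≤ exp ((7 / 8 * j ^ 2 - 2 * j) * log n / n) / j!`. For `j ≤ 2` the exponent is negative.
For `j ≥ 3`, since `log x / x` decreases beyond `e`, `log n / n` may be replaced by
`log (4 * j) / (4 * j)`, and what remains,
`(7 * j - 16) / 32 * log (4 * j) + (j - 1) * log 2 ≤ log j!`, holds at `j = 3` because
`2 ^ 42 ≤ 3 ^ 27` and is preserved by `j ↦ j + 1`, the left side growing by less than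
`log (j + 1)`.
-/

open Real Finset

lemma one_sub_le_exp_neg_sub_sq_div_two {x : ℝ} (h0 : 0 ≤ x) (h1 : x < 1) :
    1 - x ≤ exp (-x - x ^ 2 / 2) := by
  have hsum := hasSum_pow_div_log_of_abs_lt_one (by rwa [abs_of_nonneg h0])
  have hpartial : x + x ^ 2 / 2 ≤ -log (1 - x) := by
    have := sum_le_hasSum (range 2) (fun i _ => by positivity) hsum
    norm_num [sum_range_succ] at this
    linarith
  calc 1 - x = exp (log (1 - x)) := (exp_log (by linarith)).symm
    _ ≤ exp (-x - x ^ 2 / 2) := exp_le_exp.2 (by linarith)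

lemma factorial_div_factorial_sub_le_pow {n j : ℕ} (hjn : j ≤ n) :
    (n.factorial : ℝ) / (n - j).factorial ≤ (n : ℝ) ^ j := by
  rw [← Nat.factorial_mul_descFactorial hjn, Nat.cast_mul,
    mul_div_cancel_left₀ _ (by positivity)]
  exact_mod_cast Nat.descFactorial_le_pow n j

lemma sum_Icc_two_mul_half_pow_le (m : ℕ) : ∑ j ∈ Icc 1 m, 2 * (1 / 2 : ℝ) ^ j ≤ 2 := by
  have : ∑ j ∈ Icc 1 m, 2 * (1 / 2 : ℝ) ^ j = ∑ i ∈ range m, (1 / (2 : ℝ)) ^ i := by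
    rw [← Ico_add_one_right_eq_Icc, sum_Ico_eq_sum_range]
    refine sum_congr rfl fun i _ => ?_
    rw [pow_add]; ring
  exact this ▸ sum_geometric_two_le m

lemma log_factorial_ge {j : ℕ} (hj : 3 ≤ j) :
    (7 * j - 16) / 32 * log (4 * j) + (j - 1) * log 2 ≤ log j.factorial := by
  induction j, hj using Nat.le_induction with
  | base =>
    -- 32 times the claim, exponentiated
    have h : ((2 : ℝ) ^ 64 * 12 ^ 5) ≤ 6 ^ 32 := by norm_num
    have := log_le_log (by positivity) h
    rw [log_mul (by norm_num) (by norm_num), log_pow, log_pow, log_pow] at this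
    norm_num [Nat.factorial]
    norm_num at this
    linarith
  | succ j hj ih =>
    have hjpos : (0 : ℝ) < j := by positivity
    have hj3 : (3 : ℝ) ≤ j := by exact_mod_cast hj
    have hlog4 : log (4 * (j + 1)) = 2 * log 2 + log (j + 1) := by
      rw [log_mul (by norm_num) (by positivity), show (4 : ℝ) = 2 ^ 2 by norm_num, log_pow]
      push_cast; ring
    have hincr : log (4 * (j + 1)) - log (4 * j) ≤ 1 / j := by
      rw [← log_div (by positivity) (by positivity)]
      calc log (4 * (j + 1) / (4 * j)) ≤ 4 * (j + 1) / (4 * j) - 1 :=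
            log_le_sub_one_of_pos (by positivity)
        _ = 1 / j := by field_simp; ring
    have hgrow : 2 * log 2 + 1 - 4 / (j + 1) ≤ log (j + 1) := by
      have := one_sub_inv_le_log_of_pos (x := (j + 1) / 4) (by positivity)
      rw [log_div (by positivity) (by norm_num), show (4 : ℝ) = 2 ^ 2 by norm_num, log_pow,
        inv_div] at this
      push_cast at this ⊢
      linarith
    have hslope :
        (7 * j - 16) / 32 * (log (4 * (j + 1)) - log (4 * j)) ≤ 7 / 32 - 1 / (2 * j) :=
      calc _ ≤ ((7 * j - 16) / 32 : ℝ) * (1 / j) := by gcongr; linarith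
        _ = 7 / 32 - 1 / (2 * j) := by field_simp; ring
    have hrat : 25 / 8 / (j + 1) - 1 / (2 * j) ≤ (31 : ℝ) / 48 := by
      rw [div_sub_div _ _ (by positivity) (by positivity),
        div_le_div_iff₀ (by positivity) (by norm_num)]
      nlinarith
    have hfac : log ((j + 1).factorial : ℝ) = log (j + 1) + log j.factorial := by
      rw [Nat.factorial_succ, Nat.cast_mul, log_mul (by positivity) (by positivity)]
      push_cast; ring
    have h2 := log_two_gt_d9
    rw [hfac]
    push_cast
    rw [hlog4] at hslope ⊢
    linear_combination ih + hslope + 25 / 32 * hgrow + hrat + 1 / 8 * h2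

lemma mul_log_div_le_log_factorial_sub {n j : ℕ} (hj : 1 ≤ j) (hjn : 4 * j ≤ n) :
    (7 / 8 * j ^ 2 - 2 * j) * (log n / n) ≤ log j.factorial - (j - 1) * log 2 := by
  have hc : 0 ≤ log n / n := div_nonneg (log_natCast_nonneg n) n.cast_nonneg
  rcases le_or_gt j 2 with hj2 | hj3
  · interval_cases j <;> norm_num <;> nlinarith
  · have h4j : (4 * j : ℝ) ≤ n := by exact_mod_cast hjn
    have he : exp 1 ≤ 4 * j := by
      have : (3 : ℝ) ≤ j := by exact_mod_cast hj3
      linarith [exp_one_lt_d9]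
    have hanti : log n / n ≤ log (4 * j) / (4 * j) :=
      log_div_self_antitoneOn he (he.trans h4j) h4j
    have hcoef : 0 ≤ 7 / 8 * (j : ℝ) ^ 2 - 2 * j := by
      have : (3 : ℝ) ≤ j := by exact_mod_cast hj3
      nlinarith
    calc (7 / 8 * j ^ 2 - 2 * j) * (log n / n)
        ≤ (7 / 8 * j ^ 2 - 2 * j) * (log (4 * j) / (4 * j)) := by gcongr
      _ = (7 * j - 16) / 32 * log (4 * j) := by field_simp; ring
      _ ≤ log j.factorial - (j - 1) * log 2 := by linarith [log_factorial_ge hj3]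

lemma two_mul_sub_le_mul_add_sq_div_two {j n x : ℝ} (hj : 0 ≤ j) (hjn : 4 * j ≤ n)
    (hn : 0 < n) (hx : x = 2 * j / n * (1 - (j - 1) / n)) :
    2 * j - (7 / 8 * j ^ 2 - 2 * j) / n ≤ (x + x ^ 2 / 2) * n := by
  have hxlb : 3 * j / (2 * n) ≤ x := by
    rw [hx, div_le_iff₀ (by positivity)]
    field_simp
    nlinarith
  have hxsq : 9 * j ^ 2 / (4 * n ^ 2) ≤ x ^ 2 := by
    calc 9 * j ^ 2 / (4 * n ^ 2) = (3 * j / (2 * n)) ^ 2 := by ring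
      _ ≤ x ^ 2 := pow_le_pow_left₀ (by positivity) hxlb 2
  have hxn : x * n = 2 * j - 2 * j * (j - 1) / n := by
    rw [hx]; field_simp
  have : 9 * j ^ 2 / (8 * n) ≤ x ^ 2 / 2 * n := by
    calc 9 * j ^ 2 / (8 * n) = 9 * j ^ 2 / (4 * n ^ 2) / 2 * n := by field_simp; ring
      _ ≤ x ^ 2 / 2 * n := by gcongr
  have e : 2 * j - (7 / 8 * j ^ 2 - 2 * j) / n
      = 2 * j - 2 * j * (j - 1) / n + 9 * j ^ 2 / (8 * n) := by
    field_simp; ring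
  rw [e, add_mul, hxn]
  linarith

noncomputable def Aj (n j : ℕ) : ℝ :=
  ((n.factorial : ℝ) / (n - j).factorial) ^ 2 * (1 / j.factorial)
    * (1 - (2 * (j : ℝ) / n) * (1 - ((j : ℝ) - 1) / n)) ^ ((n : ℝ) * log n)

lemma one_sub_rpow_le_exp {n j : ℕ} (hj : 1 ≤ j) (hjn : 4 * j ≤ n) :
    (1 - 2 * (j : ℝ) / n * (1 - ((j : ℝ) - 1) / n)) ^ ((n : ℝ) * log n)
      ≤ exp (-(2 * j * log n) + (7 / 8 * j ^ 2 - 2 * j) * (log n / n)) := by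
  have hn : (0 : ℝ) < n := by exact_mod_cast (by omega : 0 < n)
  set x := 2 * (j : ℝ) / n * (1 - ((j : ℝ) - 1) / n) with hx
  have hL : 0 ≤ log (n : ℝ) := log_natCast_nonneg n
  have h4j : 4 * (j : ℝ) ≤ n := by exact_mod_cast hjn
  have hj1 : (1 : ℝ) ≤ j := by exact_mod_cast hj
  have hfst : 2 * (j : ℝ) / n ≤ 1 / 2 := by rw [div_le_iff₀ hn]; linarith
  have hsnd : 0 ≤ ((j : ℝ) - 1) / n ∧ ((j : ℝ) - 1) / n ≤ 1 :=
    ⟨by positivity, by rw [div_le_one hn]; linarith⟩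
  have hx0 : 0 ≤ x := mul_nonneg (by positivity) (by linarith)
  have hx1 : x < 1 := by
    have : x ≤ 1 / 2 * 1 := mul_le_mul hfst (by linarith) (by linarith) (by norm_num)
    linarith
  calc (1 - x) ^ ((n : ℝ) * log n) ≤ exp (-x - x ^ 2 / 2) ^ ((n : ℝ) * log n) :=
        rpow_le_rpow (by linarith) (one_sub_le_exp_neg_sub_sq_div_two hx0 hx1) (by positivity)
    _ = exp (-((x + x ^ 2 / 2) * n) * log n) := by rw [← exp_mul]; ring_nf
    _ ≤ exp (-(2 * j * log n) + (7 / 8 * j ^ 2 - 2 * j) * (log n / n)) := by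
        gcongr
        linear_combination mul_le_mul_of_nonneg_right
          (two_mul_sub_le_mul_add_sq_div_two (by positivity) h4j hn hx) hL

lemma Aj_le {n j : ℕ} (hj : 1 ≤ j) (hjn : 4 * j ≤ n) : Aj n j ≤ 2 * (1 / 2) ^ j := by
  set c := (7 / 8 * (j : ℝ) ^ 2 - 2 * j) * (log n / n)
  have hn : (0 : ℝ) < n := by exact_mod_cast (by omega : 0 < n)
  have hnj : ((n : ℝ) ^ j) ^ 2 = exp (2 * j * log n) := by
    rw [← pow_mul, ← exp_log (by positivity : (0 : ℝ) < n ^ (j * 2)), log_pow]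
    push_cast; ring_nf
  have hc : exp c ≤ j.factorial * (2 * (1 / 2) ^ j) :=
    calc exp c ≤ exp (log j.factorial - (j - 1) * log 2) :=
          exp_le_exp.2 (mul_log_div_le_log_factorial_sub hj hjn)
      _ = j.factorial * (2 * (1 / 2) ^ j) := by
          rw [exp_sub, exp_log (by positivity),
            show ((j : ℝ) - 1) * log 2 = log (2 ^ j / 2) by
              rw [log_div (by positivity) two_ne_zero, log_pow]; ring,
            exp_log (by positivity), one_div, inv_pow]
          field_simp
  calc Aj n j ≤ ((n.factorial : ℝ) / (n - j).factorial) ^ 2 * (1 / j.factorial)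
          * exp (-(2 * j * log n) + c) :=
        mul_le_mul_of_nonneg_left (one_sub_rpow_le_exp hj hjn) (by positivity)
      _ ≤ ((n : ℝ) ^ j) ^ 2 * (1 / j.factorial) * exp (-(2 * j * log n) + c) := by
        gcongr
        exact factorial_div_factorial_sub_le_pow (by omega)
      _ = exp c / j.factorial := by rw [hnj]; field_simp; rw [← exp_add]; ring_nf
      _ ≤ 2 * (1 / 2) ^ j := by rw [div_le_iff₀ (by positivity)]; linarith

theorem sum_Aj_le_two_general (n : ℕ) :
    ∑ j ∈ Finset.Icc 1 (n / 4),
      ((n.factorial : ℝ) / (n - j).factorial) ^ 2 * (1 / j.factorial)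
        * (1 - (2 * (j : ℝ) / n) * (1 - ((j : ℝ) - 1) / n)) ^ ((n : ℝ) * Real.log n)
      ≤ 2 :=
  calc _ ≤ ∑ j ∈ Icc 1 (n / 4), 2 * (1 / 2 : ℝ) ^ j :=
        sum_le_sum fun j hj => Aj_le (mem_Icc.1 hj).1 (by have := (mem_Icc.1 hj).2; omega)
    _ ≤ 2 := sum_Icc_two_mul_half_pow_le _

/-- With `A_j = (n!/(n-j)!)² · (1/j!) · (1 - (2j/n)(1 - (j-1)/n))^{n log n}`,
for `n ≥ 14` we have `Σ_{j=1}^{⌊n/4⌋} A_j ≤ 2`. -/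
theorem sum_Aj_le_two (n : ℕ) (hn : 14 ≤ n) :
    ∑ j ∈ Finset.Icc 1 (n / 4),
      ((n.factorial : ℝ) / (n - j).factorial) ^ 2 * (1 / j.factorial)
        * (1 - (2 * (j : ℝ) / n) * (1 - ((j : ℝ) - 1) / n)) ^ ((n : ℝ) * Real.log n)
      ≤ 2 :=
  sum_Aj_le_two_general n
end

section
/- Let B_j = (n!/(n-j)!)^2 · (1/j!) · exp(-j·log n - 2j). For n ≥ 2, Σ_{⌈n/2⌉ ≤ j ≤ n} B_j ≤ 2·(2/e)^{3n/2}. -/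
/-!
For `j ≥ n/2` the ratio `B_{j+1} / B_j = (n - j)² / ((j + 1) n e²)` is at most `1/2`, so the sum
is at most `2 B_m` with `m = ⌈n/2⌉`. Writing `B_m = C(n, m)² m! / (n e²)^m`, the estimates
`C(n, m)² (3n + 2) ≤ 2 · 4ⁿ` (from `C(2k, k)² (3k + 1) ≤ 16^k`), Stirling's `m! ≤ e √m (m/e)^m` and
`(2m)^m ≤ n^m e^{2m - n}` give `B_m ≤ 4ⁿ / (2^m e^{n + m}) ≤ (2/e)^{3n/2}`.
-/

open Real Finset
open scoped Nat

theorem Finset.sum_Icc_add_le_two_mul_of_halving {α : Type*} [Semiring α] [PartialOrder α]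
    [IsOrderedRing α] {f : ℕ → α} {m n : ℕ} (hmn : m ≤ n)
    (hf : ∀ j, m ≤ j → j < n → 2 * f (j + 1) ≤ f j) :
    ∑ j ∈ Icc m n, f j + f n ≤ 2 * f m := by
  induction n, hmn using Nat.le_induction with
  | base => simp [two_mul]
  | succ n hmn ih =>
    calc ∑ j ∈ Icc m (n + 1), f j + f (n + 1) = ∑ j ∈ Icc m n, f j + 2 * f (n + 1) := by
          rw [sum_Icc_succ_top (by omega), two_mul, add_assoc]
      _ ≤ ∑ j ∈ Icc m n, f j + f n := by gcongr; exact hf n hmn (by omega)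
      _ ≤ 2 * f m := ih fun j hj hjn => hf j hj (by omega)

theorem Nat.centralBinom_sq_mul_le (k : ℕ) : k.centralBinom ^ 2 * (3 * k + 1) ≤ 16 ^ k := by
  induction k with
  | zero => simp
  | succ k ih =>
    have hrec := Nat.succ_mul_centralBinom_succ k
    have hpoly : (2 * k + 1) ^ 2 * (3 * k + 4) ≤ 4 * (k + 1) ^ 2 * (3 * k + 1) := by
      ring_nf; omega
    refine Nat.le_of_mul_le_mul_right (c := (k + 1) ^ 2) ?_ (by positivity)
    calc (k + 1).centralBinom ^ 2 * (3 * (k + 1) + 1) * (k + 1) ^ 2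
        = ((k + 1) * (k + 1).centralBinom) ^ 2 * (3 * k + 4) := by ring
      _ = 4 * k.centralBinom ^ 2 * ((2 * k + 1) ^ 2 * (3 * k + 4)) := by rw [hrec]; ring
      _ ≤ 4 * k.centralBinom ^ 2 * (4 * (k + 1) ^ 2 * (3 * k + 1)) := by gcongr
      _ = 16 * (k.centralBinom ^ 2 * (3 * k + 1)) * (k + 1) ^ 2 := by ring
      _ ≤ 16 * 16 ^ k * (k + 1) ^ 2 := by gcongr
      _ = 16 ^ (k + 1) * (k + 1) ^ 2 := by ring

theorem Nat.choose_half_sq_mul_le (n : ℕ) :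
    n.choose ((n + 1) / 2) ^ 2 * (3 * n + 2) ≤ 2 * 4 ^ n := by
  obtain ⟨k, rfl | rfl⟩ := n.even_or_odd'
  · have h := Nat.centralBinom_sq_mul_le k
    rw [show (2 * k + 1) / 2 = k by omega, ← Nat.centralBinom_eq_two_mul_choose, pow_mul]
    norm_num
    linarith
  · have h := Nat.centralBinom_sq_mul_le (k + 1)
    have hdouble : (k + 1).centralBinom = 2 * (2 * k + 1).choose (k + 1) := by
      rw [Nat.centralBinom_eq_two_mul_choose, show 2 * (k + 1) = 2 * k + 1 + 1 by ring,
        Nat.choose_succ_succ', Nat.choose_symm_half]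
      ring
    have hpow : 4 ^ (2 * k + 1) = 4 * 16 ^ k := by rw [pow_succ, pow_mul]; ring
    rw [show (2 * k + 1 + 1) / 2 = k + 1 by omega, hpow]
    rw [hdouble, pow_succ 16] at h
    nlinarith

theorem Nat.factorial_le_exp_one_mul_sqrt_mul_pow {n : ℕ} (hn : n ≠ 0) :
    (n ! : ℝ) ≤ exp 1 * √n * (n / exp 1) ^ n := by
  have h : Stirling.stirlingSeq n ≤ exp 1 / √2 := by
    obtain ⟨k, rfl⟩ := Nat.exists_eq_succ_of_ne_zero hn
    simpa [Stirling.stirlingSeq_one] using Stirling.stirlingSeq'_antitone (Nat.zero_le k)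
  rw [Stirling.stirlingSeq, div_le_iff₀ (by positivity), Real.sqrt_mul zero_le_two] at h
  calc (n ! : ℝ) ≤ exp 1 / √2 * (√2 * √n * (n / exp 1) ^ n) := h
    _ = exp 1 * √n * (n / exp 1) ^ n := by field_simp

theorem Real.pow_le_pow_mul_exp_sub {x y : ℝ} {m : ℕ} (hx : 0 < x) (hxy : x ≤ y) (hm : m ≤ x) :
    y ^ m ≤ x ^ m * exp (y - x) := by
  have hy : y ≤ x * exp ((y - x) / x) := by
    have := add_one_le_exp ((y - x) / x)
    rwa [div_add_one hx.ne', div_le_iff₀' hx, sub_add_cancel] at this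
  calc y ^ m ≤ (x * exp ((y - x) / x)) ^ m := by gcongr; linarith
    _ = x ^ m * exp (m * ((y - x) / x)) := by rw [mul_pow, ← exp_nat_mul]
    _ ≤ x ^ m * exp (y - x) := by
        gcongr
        rw [mul_div_assoc', div_le_iff₀ hx]
        nlinarith

lemma four_pow_div_two_pow_mul_exp_le {n m : ℕ} (h : n ≤ 2 * m) :
    (4 : ℝ) ^ n / (2 ^ m * exp 1 ^ (n + m)) ≤ (2 / exp 1) ^ (3 * (n : ℝ) / 2) := by
  have h' : (n : ℝ) ≤ 2 * m := by exact_mod_cast h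
  have hlog2 : 0 < log 2 := log_pos one_lt_two
  rw [← log_le_log_iff (by positivity) (by positivity), log_rpow (by positivity),
    log_div (by positivity) (by positivity), log_mul (by positivity) (by positivity),
    log_div (by positivity) (by positivity), log_pow, log_pow, log_pow, log_exp,
    show (4 : ℝ) = 2 ^ 2 by norm_num, log_pow]
  push_cast
  nlinarith

noncomputable def Bj (n j : ℕ) : ℝ :=
  ((n ! : ℝ) / (n - j)!) ^ 2 * (1 / j !) * exp (-(j : ℝ) * log n - 2 * j)

lemma Bj_nonneg (n j : ℕ) : 0 ≤ Bj n j := by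
  unfold Bj; positivity

lemma exp_neg_mul_log_sub_two_mul {n : ℕ} (hn : n ≠ 0) (j : ℕ) :
    exp (-(j : ℝ) * log n - 2 * j) = 1 / (n * exp 2) ^ j := by
  rw [one_div, ← exp_log (x := (n : ℝ)) (by positivity), ← exp_add, ← exp_nat_mul, ← exp_neg,
    log_exp]
  ring_nf

lemma Bj_eq_choose {n j : ℕ} (hn : n ≠ 0) (hj : j ≤ n) :
    Bj n j = (n.choose j) ^ 2 * j ! / (n * exp 2) ^ j := by
  have hfac : (n ! : ℝ) = n.choose j * j ! * (n - j)! := by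
    exact_mod_cast (Nat.choose_mul_factorial_mul_factorial hj).symm
  rw [Bj, exp_neg_mul_log_sub_two_mul hn, hfac]
  field_simp

lemma Bj_succ_mul {n j : ℕ} (hj : j < n) :
    Bj n (j + 1) * ((j + 1) * (n * exp 2)) = Bj n j * (n - j) ^ 2 := by
  have hn : n ≠ 0 := by omega
  have hrec : (n.choose (j + 1) : ℝ) * (j + 1) = n.choose j * (n - j) := by
    rw [← Nat.cast_sub hj.le]; exact_mod_cast Nat.choose_succ_right_eq n j
  calc Bj n (j + 1) * ((j + 1) * (n * exp 2))
      = (n.choose (j + 1) * (j + 1)) ^ 2 * j ! / (n * exp 2) ^ j := by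
        rw [Bj_eq_choose (j := j + 1) hn hj, Nat.factorial_succ]; push_cast; field_simp; ring
    _ = Bj n j * (n - j) ^ 2 := by rw [hrec, Bj_eq_choose hn hj.le]; ring

lemma two_mul_Bj_succ_le {n j : ℕ} (hnj : n ≤ 2 * j) (hj : j < n) :
    2 * Bj n (j + 1) ≤ Bj n j := by
  have hpos : (0 : ℝ) < (j + 1) * (n * exp 2) := by
    have : (0 : ℝ) < n := by exact_mod_cast (show 0 < n by omega)
    positivity
  have hsq : 2 * ((n : ℝ) - j) ^ 2 ≤ (j + 1) * (n * exp 2) := by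
    have hnj' : (n : ℝ) ≤ 2 * j := by exact_mod_cast hnj
    have hjn : (j : ℝ) ≤ n := by exact_mod_cast hj.le
    have he : 1 ≤ exp (2 : ℝ) := one_le_exp (by norm_num)
    nlinarith [mul_le_mul_of_nonneg_left he (by positivity : (0 : ℝ) ≤ (j + 1) * n)]
  refine le_of_mul_le_mul_right ?_ hpos
  calc 2 * Bj n (j + 1) * ((j + 1) * (n * exp 2)) = Bj n j * (2 * (n - j) ^ 2) := by
        rw [mul_assoc, Bj_succ_mul hj]; ring
    _ ≤ Bj n j * ((j + 1) * (n * exp 2)) := by gcongr; exact Bj_nonneg n j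

lemma two_mul_exp_one_mul_ceil_half_le {n : ℕ} (hn : 2 ≤ n) :
    2 * (exp 1 * ((n + 1) / 2 : ℕ)) ≤ 3 * n + 2 := by
  have hE := exp_one_lt_d9
  -- `e (n + 1) ≤ 3n + 2` needs `n ≥ 3`; for `n = 2` the ceiling is `n / 2`
  rcases (by omega : 2 * ((n + 1) / 2) ≤ n ∨ (2 * ((n + 1) / 2) ≤ n + 1 ∧ 3 ≤ n)) with h | ⟨h, h3⟩
  · have : (2 * ((n + 1) / 2 : ℕ) : ℝ) ≤ n := by exact_mod_cast h
    nlinarith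
  · have : (2 * ((n + 1) / 2 : ℕ) : ℝ) ≤ n + 1 := by exact_mod_cast h
    have : (3 : ℝ) ≤ n := by exact_mod_cast h3
    nlinarith

lemma Bj_ceil_half_le {n : ℕ} (hn : 2 ≤ n) :
    Bj n ((n + 1) / 2) ≤ 4 ^ n / (2 ^ ((n + 1) / 2) * exp 1 ^ (n + (n + 1) / 2)) := by
  set m := (n + 1) / 2
  have hm : 1 ≤ m := by omega
  have hmn : m ≤ n := by omega
  have hn0 : (0 : ℝ) < n := by positivity
  have hC : (n.choose m : ℝ) ^ 2 * (3 * n + 2) ≤ 2 * 4 ^ n := by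
    exact_mod_cast Nat.choose_half_sq_mul_le n
  have hP : (2 * m : ℝ) ^ m * exp 1 ^ n ≤ n ^ m * exp 1 ^ (2 * m) := by
    have h2m : (n : ℝ) ≤ 2 * m := by exact_mod_cast (by omega : n ≤ 2 * m)
    calc (2 * m : ℝ) ^ m * exp 1 ^ n ≤ n ^ m * exp (2 * m - n) * exp 1 ^ n := by
          gcongr
          exact Real.pow_le_pow_mul_exp_sub hn0 h2m (by exact_mod_cast hmn)
      _ = n ^ m * exp 1 ^ (2 * m) := by
          rw [mul_assoc, exp_one_pow, exp_one_pow, ← exp_add]; push_cast; ring_nf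
  set C : ℝ := (n.choose m : ℝ)
  set E := exp 1
  have hEm : 2 * (E * m) ≤ 3 * n + 2 := two_mul_exp_one_mul_ceil_half_le hn
  have hCE : C ^ 2 * (E * m) ≤ 4 ^ n := by nlinarith [sq_nonneg C]
  have hF : (m ! : ℝ) ≤ E * m * (m / E) ^ m := by
    refine (Nat.factorial_le_exp_one_mul_sqrt_mul_pow (by omega)).trans ?_
    gcongr
    exact sqrt_le_self_iff.mpr (Or.inr (by exact_mod_cast hm))
  rw [Bj_eq_choose (by omega) hmn, show exp 2 = E ^ 2 by rw [exp_one_pow]; norm_num,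
    div_le_div_iff₀ (by positivity) (by positivity)]
  calc C ^ 2 * m ! * (2 ^ m * E ^ (n + m))
      ≤ C ^ 2 * (E * m * (m / E) ^ m) * (2 ^ m * E ^ (n + m)) := by gcongr
    _ = C ^ 2 * (E * m) * ((2 * m) ^ m * E ^ n) := by
        have hE : E ≠ 0 := (exp_pos 1).ne'
        rw [div_pow]
        field_simp
        ring
    _ ≤ C ^ 2 * (E * m) * (n ^ m * E ^ (2 * m)) := by gcongr
    _ ≤ 4 ^ n * (n ^ m * E ^ (2 * m)) := by gcongr
    _ = 4 ^ n * (n * E ^ 2) ^ m := by ring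

/-- With `B_j = (n!/(n-j)!)² · (1/j!) · exp(-j·log n - 2j)`, for `n ≥ 2` we have
`Σ_{⌈n/2⌉ ≤ j ≤ n} B_j ≤ 2·(2/e)^{3n/2}`. -/
theorem sum_Bj_cont_le (n : ℕ) (hn : 2 ≤ n) :
    ∑ j ∈ Finset.Icc ((n + 1) / 2) n,
      ((n.factorial : ℝ) / (n - j).factorial) ^ 2 * (1 / j.factorial)
        * Real.exp (-(j : ℝ) * Real.log n - 2 * j)
      ≤ 2 * (2 / Real.exp 1) ^ (3 * (n : ℝ) / 2) := by
  have hsum := sum_Icc_add_le_two_mul_of_halving (f := Bj n) (by omega : (n + 1) / 2 ≤ n)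
    fun j hj hjn => two_mul_Bj_succ_le (by omega) hjn
  calc ∑ j ∈ Icc ((n + 1) / 2) n, Bj n j ≤ 2 * Bj n ((n + 1) / 2) := by
        linarith [Bj_nonneg n n]
    _ ≤ 2 * (4 ^ n / (2 ^ ((n + 1) / 2) * exp 1 ^ (n + (n + 1) / 2))) := by
        gcongr; exact Bj_ceil_half_le hn
    _ ≤ 2 * (2 / exp 1) ^ (3 * (n : ℝ) / 2) := by
        gcongr; exact four_pow_div_two_pow_mul_exp_le (by omega)
end
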